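/- arXiv:2508.04081 — 3 statements merged into one kernel-verified Lean document; each statement's English description precedes it below -/
import Mathlib

section
/- The pfaffian of the Tutte matrix is the signed generating polynomial of perfect matchings: for a finite simple graph G = (V, E) with |V| even, pf T(G) = Σ_M ε_M · Π_{e ∈ M} x_e, where the sum ranges over all perfect matchings M of G and each ε_M ∈ {+1, −1}. In particular, the monomials appearing in pf T(G) with nonzero coefficient are exactly the products Π_{e ∈ M} x_e over perfect matchings M, each with coefficient ±1. -/
open scoped Classical

/-- The index `2i` (0-based), corresponding to `2i - 1` in 1-based notation. -/
def evenIdx {m : ℕ} (i : Fin m) : Fin (2 * m) := ⟨2 * i.val, by have := i.isLt; omega⟩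

/-- The index `2i + 1` (0-based), corresponding to `2i` in 1-based notation. -/
def oddIdx {m : ℕ} (i : Fin m) : Fin (2 * m) := ⟨2 * i.val + 1, by have := i.isLt; omega⟩

/-- The pfaffian of a `2m × 2m` matrix: the sum over all permutations `σ` of
`{0, …, 2m-1}` satisfying `σ(0) < σ(2) < ⋯ < σ(2m-2)` and `σ(2i) < σ(2i+1)` for each `i`
of `sgn(σ) · Π_i A_{σ(2i), σ(2i+1)}`. -/
noncomputable def pfaffian {R : Type} [CommRing R] {m : ℕ}
    (A : Matrix (Fin (2 * m)) (Fin (2 * m)) R) : R :=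
  ∑ σ ∈ Finset.univ.filter (fun σ : Equiv.Perm (Fin (2 * m)) =>
      (∀ i : Fin m, σ (evenIdx i) < σ (oddIdx i)) ∧
      StrictMono fun i : Fin m => σ (evenIdx i)),
    (Equiv.Perm.sign σ : ℤ) • ∏ i : Fin m, A (σ (evenIdx i)) (σ (oddIdx i))

/-- The Tutte matrix of a simple graph `G` on `Fin n`, over `F[X_E]`. -/
noncomputable def tutteMatrix (F : Type) [Field F] {n : ℕ} (G : SimpleGraph (Fin n)) :
    Matrix (Fin n) (Fin n) (MvPolynomial (Sym2 (Fin n)) F) :=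
  fun u v =>
    if G.Adj u v then
      (if u < v then MvPolynomial.X s(u, v) else - MvPolynomial.X s(u, v))
    else 0

/-- `M` is (the edge set of) a perfect matching of `G`: a set of pairwise vertex-disjoint
edges of `G` covering every vertex. -/
def IsPerfectMatchingEdgeSet {n : ℕ} (G : SimpleGraph (Fin n))
    (M : Finset (Sym2 (Fin n))) : Prop :=
  ↑M ⊆ G.edgeSet ∧
  ((↑M : Set (Sym2 (Fin n))).Pairwise fun e f => ∀ v, v ∈ e → v ∉ f) ∧
  ∀ v : Fin n, ∃ e ∈ M, v ∈ e


/-!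
Each permutation in the pfaffian's sum pairs the vertices into the `m` pairs
`{σ(2i), σ(2i+1)}`, and its term is `sgn σ` times the product of the Tutte entries of these
pairs, which vanishes unless every pair is an edge; when all pairs are edges, the orientation
`σ(2i) < σ(2i+1)` makes each entry `+x_e`. Listing each pair smaller element first and the
pairs by increasing smaller element is a normal form for a set of disjoint pairs covering
`Fin (2m)`, so the surviving permutations correspond bijectively to the perfect matchings,
and the matching `M` receives the coefficient `sgn σ_M`.
-/

namespace Sym2

variable {α : Type*} [LinearOrder α]

theorem mk_inf_sup (e : Sym2 α) : s(e.inf, e.sup) = e :=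
  sortEquiv.symm_apply_apply e

theorem inf_mem (e : Sym2 α) : e.inf ∈ e := by
  induction e using Sym2.ind with
  | _ a b => simpa using min_choice a b

theorem sup_mem (e : Sym2 α) : e.sup ∈ e := by
  induction e using Sym2.ind with
  | _ a b => simpa using max_choice a b

theorem inf_lt_sup {e : Sym2 α} (h : ¬e.IsDiag) : e.inf < e.sup :=
  (Sym2.inf_le_sup e).lt_of_ne fun heq => h <| by
    rw [← e.mk_inf_sup, heq]
    exact mk_isDiag_iff.mpr rfl

end Sym2

section

open Finset

variable {m : ℕ}

theorem evenIdx_injective : Function.Injective (evenIdx (m := m)) := fun i j h => by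
  simp only [evenIdx, Fin.ext_iff] at h ⊢; omega

theorem oddIdx_injective : Function.Injective (oddIdx (m := m)) := fun i j h => by
  simp only [oddIdx, Fin.ext_iff] at h ⊢; omega

theorem evenIdx_ne_oddIdx (i j : Fin m) : evenIdx i ≠ oddIdx j := by
  simp only [evenIdx, oddIdx, ne_eq, Fin.ext_iff]; omega

noncomputable def evenOddEquiv : Fin m ⊕ Fin m ≃ Fin (2 * m) :=
  Equiv.ofBijective (Sum.elim evenIdx oddIdx) <|
    (Fintype.bijective_iff_injective_and_card _).mpr
      ⟨evenIdx_injective.sumElim oddIdx_injective evenIdx_ne_oddIdx, by simp [two_mul]⟩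

theorem Equiv.Perm.ext_evenIdx_oddIdx {σ τ : Equiv.Perm (Fin (2 * m))}
    (heven : ∀ i, σ (evenIdx i) = τ (evenIdx i)) (hodd : ∀ i, σ (oddIdx i) = τ (oddIdx i)) :
    σ = τ := by
  ext1 x
  obtain ⟨i | i, rfl⟩ := evenOddEquiv.surjective x
  exacts [heven i, hodd i]

theorem exists_perm_evenIdx_oddIdx {a b : Fin m → Fin (2 * m)}
    (h : Function.Injective (Sum.elim a b)) :
    ∃ σ : Equiv.Perm (Fin (2 * m)), ∀ i, σ (evenIdx i) = a i ∧ σ (oddIdx i) = b i := by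
  have hbij : Function.Bijective (Sum.elim a b) :=
    (Fintype.bijective_iff_injective_and_card _).mpr ⟨h, by simp [two_mul]⟩
  refine ⟨evenOddEquiv.symm.trans (Equiv.ofBijective _ hbij), fun i => ⟨?_, ?_⟩⟩
  · simp [show evenOddEquiv.symm (evenIdx i) = Sum.inl i from evenOddEquiv.symm_apply_eq.mpr rfl]
  · simp [show evenOddEquiv.symm (oddIdx i) = Sum.inr i from evenOddEquiv.symm_apply_eq.mpr rfl]

def pairEdge (σ : Equiv.Perm (Fin (2 * m))) (i : Fin m) : Sym2 (Fin (2 * m)) :=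
  s(σ (evenIdx i), σ (oddIdx i))

def pairEdges (σ : Equiv.Perm (Fin (2 * m))) : Finset (Sym2 (Fin (2 * m))) :=
  univ.image (pairEdge σ)

theorem mem_pairEdge_iff (σ : Equiv.Perm (Fin (2 * m))) (i : Fin m) (v : Fin (2 * m)) :
    v ∈ pairEdge σ i ↔ (σ.symm v : ℕ) / 2 = i := by
  rw [pairEdge, Sym2.mem_iff, ← σ.symm_apply_eq, ← σ.symm_apply_eq]
  simp only [Fin.ext_iff, evenIdx, oddIdx]
  omega

theorem pairEdge_injective (σ : Equiv.Perm (Fin (2 * m))) : Function.Injective (pairEdge σ) :=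
  fun i j h => by
    have hi := (mem_pairEdge_iff σ i _).mp (Sym2.mem_mk_left _ (σ (oddIdx i)))
    have hj := (mem_pairEdge_iff σ j (σ (evenIdx i))).mp <| by
      rw [← h]; exact Sym2.mem_mk_left _ _
    exact Fin.ext (hi.symm.trans hj)

theorem isPerfectMatchingEdgeSet_pairEdges_iff {G : SimpleGraph (Fin (2 * m))}
    {σ : Equiv.Perm (Fin (2 * m))} :
    IsPerfectMatchingEdgeSet G (pairEdges σ) ↔
      ∀ i, G.Adj (σ (evenIdx i)) (σ (oddIdx i)) := by
  refine ⟨fun h i => h.1 (mem_image_of_mem _ (mem_univ i)),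
    fun hadj => ⟨?_, ?_, fun v => ?_⟩⟩
  · rintro _ he
    obtain ⟨i, -, rfl⟩ := mem_image.mp he
    exact hadj i
  · rintro _ he _ hf hne v hve hvf
    obtain ⟨i, -, rfl⟩ := mem_image.mp he
    obtain ⟨j, -, rfl⟩ := mem_image.mp hf
    refine hne (congrArg _ (Fin.ext ?_))
    rw [← (mem_pairEdge_iff σ i v).mp hve, (mem_pairEdge_iff σ j v).mp hvf]
  · exact ⟨_, mem_image_of_mem _ (mem_univ ⟨(σ.symm v : ℕ) / 2, by omega⟩),
      (mem_pairEdge_iff σ _ v).mpr rfl⟩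

def IsSortedPairing (σ : Equiv.Perm (Fin (2 * m))) : Prop :=
  (∀ i : Fin m, σ (evenIdx i) < σ (oddIdx i)) ∧ StrictMono fun i : Fin m => σ (evenIdx i)

theorem pfaffian_eq_sum_isSortedPairing {R : Type} [CommRing R]
    (A : Matrix (Fin (2 * m)) (Fin (2 * m)) R) :
    pfaffian A = ∑ σ with IsSortedPairing σ,
      (Equiv.Perm.sign σ : ℤ) • ∏ i : Fin m, A (σ (evenIdx i)) (σ (oddIdx i)) := by
  unfold pfaffian IsSortedPairing
  congr

theorem inf_pairEdge {σ : Equiv.Perm (Fin (2 * m))} {i : Fin m}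
    (h : σ (evenIdx i) < σ (oddIdx i)) : (pairEdge σ i).inf = σ (evenIdx i) := by
  simp [pairEdge, h.le]

theorem sup_pairEdge {σ : Equiv.Perm (Fin (2 * m))} {i : Fin m}
    (h : σ (evenIdx i) < σ (oddIdx i)) : (pairEdge σ i).sup = σ (oddIdx i) := by
  simp [pairEdge, h.le]

theorem range_evenIdx_eq_inf_image_pairEdges {σ : Equiv.Perm (Fin (2 * m))}
    (h : ∀ i, σ (evenIdx i) < σ (oddIdx i)) :
    Set.range (fun i => σ (evenIdx i)) = Sym2.inf '' ↑(pairEdges σ) := by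
  rw [pairEdges, coe_image, coe_univ, Set.image_univ, ← Set.range_comp]
  exact congrArg Set.range (funext fun i => (inf_pairEdge (h i)).symm)

theorem pairEdges_injOn : Set.InjOn (pairEdges (m := m)) {σ | IsSortedPairing σ} := by
  intro σ ⟨hσ, hσmono⟩ τ ⟨hτ, hτmono⟩ hστ
  have heven : (fun i => σ (evenIdx i)) = fun i => τ (evenIdx i) := by
    rw [← hσmono.range_inj hτmono, range_evenIdx_eq_inf_image_pairEdges hσ,
      range_evenIdx_eq_inf_image_pairEdges hτ, hστ]
  have hpair : ∀ i, pairEdge σ i = pairEdge τ i := fun i => by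
    have hmem : pairEdge σ i ∈ pairEdges τ := hστ ▸ mem_image_of_mem _ (mem_univ i)
    obtain ⟨j, -, hj⟩ := mem_image.mp hmem
    have hinf := congrArg Sym2.inf hj
    rw [inf_pairEdge (hτ j), inf_pairEdge (hσ i), ← congrFun heven j] at hinf
    rw [evenIdx_injective (σ.injective hinf)] at hj
    exact hj.symm
  refine Equiv.Perm.ext_evenIdx_oddIdx (congrFun heven) fun i => ?_
  rw [← sup_pairEdge (hσ i), ← sup_pairEdge (hτ i), hpair i]

end

namespace IsPerfectMatchingEdgeSet

open Finset

variable {n : ℕ} {G : SimpleGraph (Fin n)} {M : Finset (Sym2 (Fin n))}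

theorem eq_of_mem (h : IsPerfectMatchingEdgeSet G M) {e f : Sym2 (Fin n)} {v : Fin n}
    (he : e ∈ M) (hf : f ∈ M) (hve : v ∈ e) (hvf : v ∈ f) : e = f := by
  by_contra hne
  exact h.2.1 he hf hne v hve hvf

theorem not_isDiag (h : IsPerfectMatchingEdgeSet G M) {e : Sym2 (Fin n)} (he : e ∈ M) :
    ¬e.IsDiag :=
  G.not_isDiag_of_mem_edgeSet (h.1 he)

theorem two_mul_card (h : IsPerfectMatchingEdgeSet G M) : 2 * M.card = n := by
  have hdisj : (M : Set (Sym2 (Fin n))).PairwiseDisjoint Sym2.toFinset :=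
    fun e he f hf hne => disjoint_left.mpr fun v hve hvf =>
      h.2.1 he hf hne v (Sym2.mem_toFinset.mp hve) (Sym2.mem_toFinset.mp hvf)
  have hcover : M.biUnion Sym2.toFinset = univ :=
    eq_univ_of_forall fun v => by simpa [Sym2.mem_toFinset] using h.2.2 v
  calc 2 * M.card = ∑ e ∈ M, e.toFinset.card := by
        rw [sum_congr rfl fun e he => Sym2.card_toFinset_of_not_isDiag e (h.not_isDiag he),
          sum_const, smul_eq_mul, mul_comm]
    _ = n := by rw [← card_biUnion hdisj, hcover, card_univ, Fintype.card_fin]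

end IsPerfectMatchingEdgeSet

section

open Finset

variable {m : ℕ}

/-- Order the edges by their smaller endpoints `a 0 < ⋯ < a (m-1)`; then `σ` sends `2i` and
`2i+1` to the smaller and the larger endpoint of the `i`-th edge. -/
theorem IsPerfectMatchingEdgeSet.exists_isSortedPairing {G : SimpleGraph (Fin (2 * m))}
    {M : Finset (Sym2 (Fin (2 * m)))} (h : IsPerfectMatchingEdgeSet G M) :
    ∃ σ, IsSortedPairing σ ∧ pairEdges σ = M := by
  have hN : (M.image Sym2.inf).card = m := by
    rw [card_image_of_injOn fun e he f hf hef =>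
      h.eq_of_mem he hf e.inf_mem (by rw [hef]; exact f.inf_mem)]
    have := h.two_mul_card
    omega
  set a := (M.image Sym2.inf).orderEmbOfFin hN
  choose E hEM hEa using fun i => mem_image.mp ((M.image Sym2.inf).orderEmbOfFin_mem hN i)
  have hlt : ∀ i, a i < (E i).sup := fun i => hEa i ▸ Sym2.inf_lt_sup (h.not_isDiag (hEM i))
  have hE : ∀ {i j v}, v ∈ E i → v ∈ E j → i = j := fun hi hj =>
    a.injective (by rw [← hEa, ← hEa, h.eq_of_mem (hEM _) (hEM _) hi hj])
  have hinj : Function.Injective (Sum.elim a fun i => (E i).sup) :=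
    a.injective.sumElim (fun i j hij => hE (E i).sup_mem (hij ▸ (E j).sup_mem))
      fun i j hij => by
        have hji : i = j := hE (hEa i ▸ (E i).inf_mem) (hij ▸ (E j).sup_mem)
        exact (hlt i).ne (hji ▸ hij)
  obtain ⟨σ, hσ⟩ := exists_perm_evenIdx_oddIdx hinj
  have hpair : ∀ i, pairEdge σ i = E i := fun i => by
    rw [pairEdge, (hσ i).1, (hσ i).2, ← hEa, Sym2.mk_inf_sup]
  refine ⟨σ, ⟨fun i => ?_, ?_⟩, ?_⟩
  · rw [(hσ i).1, (hσ i).2]; exact hlt i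
  · simpa only [(hσ _).1] using a.strictMono
  · refine Subset.antisymm (image_subset_iff.mpr fun i _ => hpair i ▸ hEM i) fun e he => ?_
    obtain ⟨i, hi⟩ : e.inf ∈ Set.range a := by
      rw [range_orderEmbOfFin]; exact mem_image_of_mem _ he
    rw [h.eq_of_mem he (hEM i) e.inf_mem (hi ▸ hEa i ▸ (E i).inf_mem), ← hpair]
    exact mem_image_of_mem _ (mem_univ i)

theorem prod_tutteMatrix_pairs_eq_ite (F : Type) [Field F] (G : SimpleGraph (Fin (2 * m)))
    {σ : Equiv.Perm (Fin (2 * m))} (hσ : ∀ i, σ (evenIdx i) < σ (oddIdx i)) :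
    ∏ i, tutteMatrix F G (σ (evenIdx i)) (σ (oddIdx i)) =
      if IsPerfectMatchingEdgeSet G (pairEdges σ) then ∏ e ∈ pairEdges σ, MvPolynomial.X e
      else 0 := by
  rw [isPerfectMatchingEdgeSet_pairEdges_iff]
  split_ifs with hadj
  · rw [pairEdges, prod_image fun i _ j _ h => pairEdge_injective σ h]
    exact prod_congr rfl fun i _ => by simp [tutteMatrix, hadj i, hσ i, pairEdge]
  · obtain ⟨i, hi⟩ := not_forall.mp hadj
    exact prod_eq_zero (mem_univ i) (by simp [tutteMatrix, hi])

noncomputable def matchingSign (M : Finset (Sym2 (Fin (2 * m)))) : ℤ :=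
  ∑ σ with IsSortedPairing σ ∧ pairEdges σ = M, (Equiv.Perm.sign σ : ℤ)

theorem IsPerfectMatchingEdgeSet.matchingSign_eq_one_or_neg_one {G : SimpleGraph (Fin (2 * m))}
    {M : Finset (Sym2 (Fin (2 * m)))} (h : IsPerfectMatchingEdgeSet G M) :
    matchingSign M = 1 ∨ matchingSign M = -1 := by
  obtain ⟨σ, hσ, rfl⟩ := h.exists_isSortedPairing
  have hfiber : ({τ | IsSortedPairing τ ∧ pairEdges τ = pairEdges σ} : Finset _) = {σ} :=
    eq_singleton_iff_unique_mem.mpr ⟨by simp [hσ], fun τ hτ =>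
      pairEdges_injOn (mem_filter.mp hτ).2.1 hσ (mem_filter.mp hτ).2.2⟩
  rw [matchingSign, hfiber, sum_singleton]
  rcases Int.units_eq_one_or (Equiv.Perm.sign σ) with hs | hs <;> simp [hs]

theorem pfaffian_tutteMatrix_eq_sum_matchingSign (F : Type) [Field F]
    (G : SimpleGraph (Fin (2 * m))) :
    pfaffian (tutteMatrix F G) =
      ∑ M with IsPerfectMatchingEdgeSet G M,
        (matchingSign M : MvPolynomial (Sym2 (Fin (2 * m))) F) * ∏ e ∈ M, MvPolynomial.X e := by
  calc pfaffian (tutteMatrix F G)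
      = ∑ σ with IsSortedPairing σ, if IsPerfectMatchingEdgeSet G (pairEdges σ) then
          (Equiv.Perm.sign σ : ℤ) • ∏ e ∈ pairEdges σ, MvPolynomial.X (R := F) e else 0 :=
        (pfaffian_eq_sum_isSortedPairing _).trans <| sum_congr rfl fun σ hσ => by
          rw [prod_tutteMatrix_pairs_eq_ite F G (mem_filter.mp hσ).2.1, smul_ite, smul_zero]
    _ = ∑ σ ∈ {σ | IsSortedPairing σ} with
          pairEdges σ ∈ ({M | IsPerfectMatchingEdgeSet G M} : Finset _),
          (Equiv.Perm.sign σ : ℤ) • ∏ e ∈ pairEdges σ, MvPolynomial.X (R := F) e := by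
        rw [sum_ite, sum_const_zero, add_zero]
        simp only [mem_filter, mem_univ, true_and]
    _ = ∑ M with IsPerfectMatchingEdgeSet G M,
          ∑ σ ∈ {σ | IsSortedPairing σ} with pairEdges σ = M,
          (Equiv.Perm.sign σ : ℤ) • ∏ e ∈ pairEdges σ, MvPolynomial.X (R := F) e :=
        (sum_fiberwise_eq_sum_filter _ _ _ _).symm
    _ = _ := sum_congr rfl fun M _ => by
        rw [filter_filter, sum_congr rfl fun σ hσ => by rw [(mem_filter.mp hσ).2.2],
          ← sum_smul, zsmul_eq_mul, matchingSign, Int.cast_sum]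

end

/-- The pfaffian of the Tutte matrix is the signed generating polynomial of perfect
matchings: `pf T(G) = Σ_M ε_M Π_{e ∈ M} x_e`, summed over the perfect matchings `M`
of `G`, with each `ε_M ∈ {+1, -1}`. -/
theorem pfaffian_tutteMatrix_eq_sum_perfect_matchings
    (F : Type) [Field F] (m : ℕ) (G : SimpleGraph (Fin (2 * m))) :
    ∃ ε : Finset (Sym2 (Fin (2 * m))) → ℤ,
      (∀ M, IsPerfectMatchingEdgeSet G M → ε M = 1 ∨ ε M = -1) ∧
      pfaffian (tutteMatrix F G) =
        ∑ M ∈ Finset.univ.filter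
            (fun M : Finset (Sym2 (Fin (2 * m))) => IsPerfectMatchingEdgeSet G M),
          (ε M : MvPolynomial (Sym2 (Fin (2 * m))) F) * ∏ e ∈ M, MvPolynomial.X e :=
  ⟨matchingSign, fun _ hM => hM.matchingSign_eq_one_or_neg_one,
    pfaffian_tutteMatrix_eq_sum_matchingSign F G⟩
end

section
/- Pfaffian edge self-reduction: let G = (V, E) be a simple graph with |V| even, let e ∈ E, let G_e be the graph obtained from G by deleting the edge e, and let G^e be the graph obtained from G by deleting all edges that share an endpoint with e except e itself. Then, for any assignment of field values r_{e'} to the indeterminates x_{e'}, pf T̃(G) = pf T̃(G_e) + pf T̃(G^e), where T̃(H) denotes the Tutte matrix of H with each x_{e'} replaced by r_{e'}. -/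
open scoped Classical

/-- The Tutte matrix of a graph `H` on `Fin n` with the indeterminate of each edge `e'`
replaced by the field value `r e'` (sign according to the order of the endpoints). -/
noncomputable def tutteAux {R : Type} [CommRing R] {n : ℕ} (H : SimpleGraph (Fin n))
    (r : Sym2 (Fin n) → R) : Matrix (Fin n) (Fin n) R :=
  fun u v => if H.Adj u v then (if u < v then r s(u, v) else - r s(u, v)) else 0

/-! A term of the pfaffian is indexed by a perfect matching `M` of `Fin (2 * m)`. Deleting a set
of edges from `G` kills the term of `M` exactly when it removes an edge of `M`, and otherwise
leaves it unchanged. If `e ∈ M`, no other edge of `M` meets `e`, so the term survives in `G^e`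
but not in `G_e`; if `e ∉ M`, the edge of `M` covering an endpoint of `e` is deleted in `G^e`,
so the term survives in `G_e` only. -/

lemma evenIdx_eq_or_oddIdx_eq_iff {m : ℕ} (i : Fin m) (k : Fin (2 * m)) :
    evenIdx i = k ∨ oddIdx i = k ↔ k.val / 2 = i.val := by
  simp only [evenIdx, oddIdx, Fin.ext_iff]
  omega

lemma existsUnique_mem_pair {m : ℕ} (σ : Equiv.Perm (Fin (2 * m))) (x : Fin (2 * m)) :
    ∃! i : Fin m, x ∈ s(σ (evenIdx i), σ (oddIdx i)) := by
  have hmem (i : Fin m) :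
      x ∈ s(σ (evenIdx i), σ (oddIdx i)) ↔ (σ.symm x).val / 2 = i.val := by
    rw [← evenIdx_eq_or_oddIdx_eq_iff, Sym2.mem_iff, σ.eq_symm_apply, σ.eq_symm_apply, eq_comm,
      @eq_comm _ x]
  refine ⟨⟨(σ.symm x).val / 2, by omega⟩, (hmem _).2 rfl, fun i hi => Fin.ext ?_⟩
  exact ((hmem i).1 hi).symm

lemma Sym2.exists_eq_iff_forall_ne_disjoint {V ι : Type*} (p : ι → Sym2 V)
    (hp : ∀ x, ∃! i, x ∈ p i) (e : Sym2 V) :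
    (∃ i, p i = e) ↔ ∀ i, p i ≠ e → ∀ v ∈ p i, v ∉ e := by
  constructor
  · rintro ⟨j, rfl⟩ i hij v hvi hvj
    exact hij (congrArg p ((hp v).unique hvi hvj))
  · intro h
    obtain ⟨i, hi, -⟩ := hp e.out.1
    exact ⟨i, not_not.1 fun hne => h i hne _ hi (Sym2.out_fst_mem e)⟩

section TutteMatrix

variable {R : Type} [CommRing R] {n : ℕ}

lemma tutteAux_deleteEdges (G : SimpleGraph (Fin n)) (s : Set (Sym2 (Fin n)))
    (r : Sym2 (Fin n) → R) (u v : Fin n) :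
    tutteAux (G.deleteEdges s) r u v = if s(u, v) ∈ s then 0 else tutteAux G r u v := by
  unfold tutteAux
  by_cases h : s(u, v) ∈ s <;> simp [h]

lemma prod_tutteAux_deleteEdges {ι : Type*} [Fintype ι] (G : SimpleGraph (Fin n))
    (s : Set (Sym2 (Fin n))) (r : Sym2 (Fin n) → R) (u v : ι → Fin n) :
    ∏ i, tutteAux (G.deleteEdges s) r (u i) (v i) =
      if ∀ i, s(u i, v i) ∉ s then ∏ i, tutteAux G r (u i) (v i) else 0 := by
  simp only [tutteAux_deleteEdges, ← ite_not (_ ∈ s), Fintype.prod_ite_zero]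

lemma prod_tutteAux_eq_deleteEdges_add_deleteEdges {ι : Type*} [Fintype ι]
    (G : SimpleGraph (Fin n)) (r : Sym2 (Fin n) → R) (e : Sym2 (Fin n)) {u v : ι → Fin n}
    (huv : ∀ x, ∃! i, x ∈ s(u i, v i)) :
    ∏ i, tutteAux G r (u i) (v i) =
      ∏ i, tutteAux (G.deleteEdges {e}) r (u i) (v i) +
        ∏ i, tutteAux (G.deleteEdges {f | f ≠ e ∧ ∃ w, w ∈ f ∧ w ∈ e}) r (u i) (v i) := by
  have hdel : (∀ i, s(u i, v i) ∉ ({e} : Set _)) ↔ ¬∃ i, s(u i, v i) = e := by simp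
  have hcut :
      (∀ i, s(u i, v i) ∉ {f | f ≠ e ∧ ∃ w, w ∈ f ∧ w ∈ e}) ↔ ∃ i, s(u i, v i) = e := by
    simp only [Sym2.exists_eq_iff_forall_ne_disjoint _ huv, Set.mem_ofPred_eq, not_and,
      not_exists]
  rw [prod_tutteAux_deleteEdges, prod_tutteAux_deleteEdges]
  by_cases he : ∃ i, s(u i, v i) = e
  · rw [if_neg (hdel.not.2 (not_not.2 he)), if_pos (hcut.2 he), zero_add]
  · rw [if_pos (hdel.2 he), if_neg (mt hcut.1 he), add_zero]

end TutteMatrix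

theorem pfaffian_edge_self_reduction_general (F : Type) [Field F] (m : ℕ)
    (G : SimpleGraph (Fin (2 * m))) (r : Sym2 (Fin (2 * m)) → F)
    (e : Sym2 (Fin (2 * m))) :
    pfaffian (tutteAux G r) =
      pfaffian (tutteAux (G.deleteEdges {e}) r) +
        pfaffian (tutteAux
          (G.deleteEdges {f | f ≠ e ∧ ∃ v : Fin (2 * m), v ∈ f ∧ v ∈ e}) r) := by
  unfold pfaffian
  rw [← Finset.sum_add_distrib]
  refine Finset.sum_congr rfl fun σ _ => ?_
  rw [← smul_add]
  exact congrArg _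
    (prod_tutteAux_eq_deleteEdges_add_deleteEdges G r e (existsUnique_mem_pair σ))

/-- Pfaffian edge self-reduction: for an edge `e` of `G`, with `G_e` the graph obtained by
deleting `e` and `G^e` the graph obtained by deleting all edges sharing an endpoint with
`e` except `e` itself, `pf T̃(G) = pf T̃(G_e) + pf T̃(G^e)` for any substitution
`r : E → F` of field values for the indeterminates. -/
theorem pfaffian_edge_self_reduction (F : Type) [Field F] (m : ℕ)
    (G : SimpleGraph (Fin (2 * m))) (r : Sym2 (Fin (2 * m)) → F)
    (e : Sym2 (Fin (2 * m))) (he : e ∈ G.edgeSet) :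
    pfaffian (tutteAux G r) =
      pfaffian (tutteAux (G.deleteEdges {e}) r) +
        pfaffian (tutteAux
          (G.deleteEdges {f | f ≠ e ∧ ∃ v : Fin (2 * m), v ∈ f ∧ v ∈ e}) r) :=
  pfaffian_edge_self_reduction_general F m G r e
end

section
/- Pfaffian vertex self-reduction for the exact matching problem: let G₀ = (V, E₀) and G₁ = (V, E₁) be simple graphs on the same vertex set V with |V| even, fix a vertex v ∈ V, and let δ₀(v) and δ₁(v) denote the sets of edges of E₀ and of E₁, respectively, that are incident to v. Then, over F[y], pf T̃(G₀, G₁) = pf T̃(G₀ − δ₀(v), G₁) + pf T̃(G₀, G₁ − δ₁(v)), where Gᵢ − δᵢ(v) removes the indicated edges; in particular, for every k, [y^k] pf T̃(G₀, G₁) = [y^k] pf T̃(G₀ − δ₀(v), G₁) + [y^k] pf T̃(G₀, G₁ − δ₁(v)). -/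
open scoped Classical

/-- The substituted weighted Tutte matrix `T̃(H₀, H₁) = T̃(H₀) + y·T̃(H₁) ∈ F[y]^{V×V}`,
where `r₀ e` (resp. `r₁ e`) is the field value substituted for the indeterminate of the
edge `e` of `H₀` (resp. of `H₁`), and `y = Polynomial.X`. -/
noncomputable def substWeightedTutteMatrix (F : Type) [Field F] {n : ℕ}
    (H₀ H₁ : SimpleGraph (Fin n)) (r₀ r₁ : Sym2 (Fin n) → F) :
    Matrix (Fin n) (Fin n) (Polynomial F) :=
  tutteAux H₀ (fun e => Polynomial.C (r₀ e)) +
    (Polynomial.X : Polynomial F) • tutteAux H₁ (fun e => Polynomial.C (r₁ e))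

/-!
Every term of the pfaffian is a product over the pairs `{σ(2i), σ(2i+1)}` of a perfect
matching, and exactly one of these pairs contains `v`. The factor of that pair is the
entry of `T̃(G₀, G₁)` at an edge through `v`, which splits as its `G₀`-part plus its
`y·G₁`-part, i.e. as the corresponding entries of `T̃(G₀ − δ₀(v), G₁)` and
`T̃(G₀, G₁ − δ₁(v))`; all other factors are common to the three matrices.
-/

def pairIdx {m : ℕ} (j : Fin (2 * m)) : Fin m := ⟨j.val / 2, by omega⟩

@[simp]
lemma pairIdx_evenIdx {m : ℕ} (i : Fin m) : pairIdx (evenIdx i) = i := by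
  ext; simp [pairIdx, evenIdx]

@[simp]
lemma pairIdx_oddIdx {m : ℕ} (i : Fin m) : pairIdx (oddIdx i) = i := by
  ext; simp [pairIdx, oddIdx]; omega

lemma evenIdx_pairIdx_or_oddIdx_pairIdx {m : ℕ} (j : Fin (2 * m)) :
    evenIdx (pairIdx j) = j ∨ oddIdx (pairIdx j) = j := by
  rcases Nat.even_or_odd j.val with ⟨c, hc⟩ | ⟨c, hc⟩
  · left; ext; simp only [evenIdx, pairIdx]; omega
  · right; ext; simp only [oddIdx, pairIdx]; omega

theorem pfaffian_eq_add_of_eq_add_on_vertex {R : Type} [CommRing R] {m : ℕ}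
    (A B C : Matrix (Fin (2 * m)) (Fin (2 * m)) R) (v : Fin (2 * m))
    (hOn : ∀ u w, u = v ∨ w = v → B u w + C u w = A u w)
    (hB : ∀ u w, u ≠ v → w ≠ v → B u w = A u w)
    (hC : ∀ u w, u ≠ v → w ≠ v → C u w = A u w) :
    pfaffian A = pfaffian B + pfaffian C := by
  unfold pfaffian
  rw [← Finset.sum_add_distrib]
  refine Finset.sum_congr rfl fun σ _ => ?_
  rw [← smul_add]
  congr 1
  set i₀ := pairIdx (σ.symm v)
  have hv : σ (evenIdx i₀) = v ∨ σ (oddIdx i₀) = v := by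
    rcases evenIdx_pairIdx_or_oddIdx_pairIdx (σ.symm v) with h | h <;> simp [i₀, h]
  have hoff : ∀ i, i ≠ i₀ → σ (evenIdx i) ≠ v ∧ σ (oddIdx i) ≠ v := by
    refine fun i hi => ⟨fun h => hi ?_, fun h => hi ?_⟩ <;> simp [i₀, ← h]
  refine (Finset.prod_add_prod_eq (Finset.mem_univ i₀) (hOn _ _ hv) ?_ ?_).symm
  · exact fun i _ hi => hB _ _ (hoff i hi).1 (hoff i hi).2
  · exact fun i _ hi => hC _ _ (hoff i hi).1 (hoff i hi).2

lemma tutteAux_deleteEdges_apply {R : Type} [CommRing R] {n : ℕ} (H : SimpleGraph (Fin n))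
    (s : Set (Sym2 (Fin n))) (r : Sym2 (Fin n) → R) (u w : Fin n) :
    tutteAux (H.deleteEdges s) r u w = if s(u, w) ∈ s then 0 else tutteAux H r u w := by
  by_cases hs : s(u, w) ∈ s <;> simp [tutteAux, SimpleGraph.deleteEdges_adj, hs]

/-- Pfaffian vertex self-reduction for the exact matching problem: for a fixed vertex
`v`, deleting from `G₀` the weight-0 edges at `v`, resp. from `G₁` the weight-1 edges at
`v`, we have `pf T̃(G₀, G₁) = pf T̃(G₀ − δ₀(v), G₁) + pf T̃(G₀, G₁ − δ₁(v))` over `F[y]`;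
in particular the coefficients of `y^k` satisfy the same identity for every `k`. -/
theorem pfaffian_vertex_self_reduction (F : Type) [Field F] (m : ℕ)
    (G₀ G₁ : SimpleGraph (Fin (2 * m))) (r₀ r₁ : Sym2 (Fin (2 * m)) → F)
    (v : Fin (2 * m)) :
    (pfaffian (substWeightedTutteMatrix F G₀ G₁ r₀ r₁) =
        pfaffian (substWeightedTutteMatrix F (G₀.deleteEdges {f | v ∈ f}) G₁ r₀ r₁) +
          pfaffian (substWeightedTutteMatrix F G₀ (G₁.deleteEdges {f | v ∈ f}) r₀ r₁)) ∧
      ∀ k : ℕ,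
        (pfaffian (substWeightedTutteMatrix F G₀ G₁ r₀ r₁)).coeff k =
          (pfaffian
            (substWeightedTutteMatrix F (G₀.deleteEdges {f | v ∈ f}) G₁ r₀ r₁)).coeff k +
          (pfaffian
            (substWeightedTutteMatrix F G₀ (G₁.deleteEdges {f | v ∈ f}) r₀ r₁)).coeff k := by
  have hmem : ∀ u w, s(u, w) ∈ {f : Sym2 (Fin (2 * m)) | v ∈ f} ↔ u = v ∨ w = v := by
    simp [eq_comm]
  have split := pfaffian_eq_add_of_eq_add_on_vertex (substWeightedTutteMatrix F G₀ G₁ r₀ r₁)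
    (substWeightedTutteMatrix F (G₀.deleteEdges {f | v ∈ f}) G₁ r₀ r₁)
    (substWeightedTutteMatrix F G₀ (G₁.deleteEdges {f | v ∈ f}) r₀ r₁) v
    (fun u w h => by
      simp [substWeightedTutteMatrix, tutteAux_deleteEdges_apply, (hmem u w).2 h, add_comm])
    (fun u w hu hw => by
      simp [substWeightedTutteMatrix, tutteAux_deleteEdges_apply, hmem, hu, hw])
    (fun u w hu hw => by
      simp [substWeightedTutteMatrix, tutteAux_deleteEdges_apply, hmem, hu, hw])
  exact ⟨split, fun k => by rw [split, Polynomial.coeff_add]⟩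
end
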